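/- arXiv:2510.08453 — 2 statements merged into one kernel-verified Lean document; each statement's English description precedes it below -/
import Mathlib

section
/- Let h ≻ j be two outcomes with an infinite family of mixed sequences h^(τ−β) ⌢ j^β for β = 0,…,τ indexed over an infinite τ, where the relation is strict at each step: h^(τ−β) ⌢ j^β ≻ h^(τ−β−1) ⌢ j^(β+1). If the indifference relation ∼ is compact (every infinite collection of these sequences contains two distinct indifferent members), then a contradiction follows; hence a compact total preference relation cannot be strictly separable on sequences of infinite length. -/
/-- A compact total preference relation cannot be strictly separable on the
family of mixed sequences `h^(τ-β) ⌢ j^β` (modelled as functions `ℕ → X`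
equal to `j` on an initial segment of length `β` and `h` afterwards):
if each step of the chain is strict and the indifference relation is compact,
a contradiction follows. -/
theorem stmt_1 {X : Type*} (r : (ℕ → X) → (ℕ → X) → Prop)
    (hrefl : Reflexive r) (htrans : Transitive r)
    (htotal : ∀ x y : ℕ → X, r x y ∨ r y x)
    (h j : X) (hne : h ≠ j)
    (seq : ℕ → ℕ → X)
    (hseq : ∀ β t : ℕ, seq β t = if t < β then j else h)
    (hstrict : ∀ β : ℕ, r (seq β) (seq (β + 1)) ∧ ¬ r (seq (β + 1)) (seq β))
    (hcompact : ∀ u : Set (ℕ → X), u.Infinite →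
      ∃ x ∈ u, ∃ y ∈ u, x ≠ y ∧ r x y ∧ r y x) :
    False := by
  -- seq is injective
  have hinj : Function.Injective seq := by
    intro a b hab
    by_contra hne'
    rcases Nat.lt_or_ge a b with hlt | hge
    · have := congrFun hab a
      rw [hseq, hseq] at this
      simp [hlt, Nat.lt_irrefl] at this
      exact hne this
    · have hlt : b < a := lt_of_le_of_ne hge (fun e => hne' e.symm)
      have := congrFun hab b
      rw [hseq, hseq] at this
      simp [hlt, Nat.lt_irrefl] at this
      exact hne this.symm
  -- chain: r (seq a) (seq b) for a ≤ b
  have hchain : ∀ a b : ℕ, a ≤ b → r (seq a) (seq b) := by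
    intro a b hab
    induction b with
    | zero => simp_all; exact hrefl _
    | succ n ih =>
      rcases Nat.lt_or_ge a (n + 1) with hlt | hge
      · exact htrans (ih (Nat.lt_succ_iff.mp hlt)) (hstrict n).1
      · have : a = n + 1 := le_antisymm hab hge
        subst this; exact hrefl _
  have hinf : (Set.range seq).Infinite := Set.infinite_range_of_injective hinj
  obtain ⟨x, ⟨a, rfl⟩, y, ⟨b, rfl⟩, hxy, hr1, hr2⟩ := hcompact _ hinf
  have hab : a ≠ b := fun e => hxy (congrArg seq e)
  rcases Nat.lt_or_ge a b with hlt | hge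
  · exact (hstrict a).2 (htrans (hchain (a + 1) b hlt) hr2)
  · have hlt : b < a := lt_of_le_of_ne hge (Ne.symm hab)
    exact (hstrict b).2 (htrans (hchain (b + 1) a hlt) hr1)
end

section
/- Backward induction existence: every finite extensive game with perfect information in which each player's preference over terminal histories is total and transitive has at least one subgame perfect equilibrium. -/
open scoped Classical

/-- A finite extensive game with perfect information, with histories encoded
as finite lists of actions and, for each player, a preference relation
(`pref i z z'` meaning `z ≿ᵢ z'`) over histories. -/
structure ExtGameP (A I : Type) where
  H : Finset (List A)
  nil_mem : ([] : List A) ∈ H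
  prefix_closed : ∀ h ∈ H, ∀ h' : List A, h' <+: h → h' ∈ H
  P : List A → I
  pref : I → List A → List A → Prop

namespace ExtGameP

variable {A I : Type}

/-- `h` is a terminal history of `G`. -/
def Terminal (G : ExtGameP A I) (h : List A) : Prop :=
  h ∈ G.H ∧ ∀ a : A, h ++ [a] ∉ G.H

/-- A joint strategy profile is valid if it always picks available actions. -/
def Valid (G : ExtGameP A I) (σ : List A → A) : Prop :=
  ∀ h ∈ G.H, ¬ G.Terminal h → h ++ [σ h] ∈ G.H

/-- Run the game from history `h` following `σ`, with fuel `n`. -/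
noncomputable def run (G : ExtGameP A I) (σ : List A → A) : ℕ → List A → List A
  | 0, h => h
  | n + 1, h => if G.Terminal h then h else G.run σ n (h ++ [σ h])

/-- The terminal history reached from `h` by following `σ`. -/
noncomputable def outcomeFrom (G : ExtGameP A I) (σ : List A → A) (h : List A) :
    List A :=
  G.run σ G.H.card h

/-- Subgame perfect equilibrium: from every history, the outcome of any
unilateral deviation by a player is weakly worse for that player. -/
def IsSPE (G : ExtGameP A I) (σ : List A → A) : Prop :=
  G.Valid σ ∧
    ∀ i : I, ∀ h ∈ G.H, ∀ σ' : List A → A, G.Valid σ' →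
      (∀ h' : List A, G.P h' ≠ i → σ' h' = σ h') →
      G.pref i (G.outcomeFrom σ h) (G.outcomeFrom σ' h)

end ExtGameP

/-! Backward induction. Every history is shorter than the number of histories, so one can
recurse on the remaining depth `#H - length h`: at a nonterminal history the mover picks a move
whose backward-induction outcome she weakly prefers to those of all other moves. Such a best
move exists because, by induction, these outcomes are terminal, and on the finitely many of them
her preference is total and transitive. The resulting profile is subgame perfect by a second
induction on depth: where the deviating player moves, the equilibrium move is at least as good
as the first move of the deviation, after which the deviation is no better by induction; where
another player moves, both profiles make the same move. -/

theorem Finset.exists_forall_rel_of_total {α β : Type*} {r : β → β → Prop}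
    (htrans : ∀ a b c, r a b → r b c → r a c) (f : α → β) {s : Finset α} (hs : s.Nonempty)
    (htotal : ∀ x ∈ s, ∀ y ∈ s, r (f x) (f y) ∨ r (f y) (f x)) :
    ∃ m ∈ s, ∀ x ∈ s, r (f m) (f x) := by
  induction hs using Finset.Nonempty.cons_induction with
  | singleton a =>
    refine ⟨a, Finset.mem_singleton_self a, fun x hx => ?_⟩
    rw [Finset.mem_singleton.1 hx]
    exact (htotal a (Finset.mem_singleton_self a) a (Finset.mem_singleton_self a)).elim id id
  | cons a s _ _ ih =>
    obtain ⟨m, hm, hbest⟩ :=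
      ih fun x hx y hy => htotal x (Finset.mem_cons_of_mem hx) y (Finset.mem_cons_of_mem hy)
    rcases htotal a (Finset.mem_cons_self a s) m (Finset.mem_cons_of_mem hm) with ham | hma
    · refine ⟨a, Finset.mem_cons_self a s, fun x hx => ?_⟩
      rcases Finset.mem_cons.1 hx with rfl | hx
      · exact (htotal x (Finset.mem_cons_self x s) x (Finset.mem_cons_self x s)).elim id id
      · exact htrans _ _ _ ham (hbest x hx)
    · refine ⟨m, Finset.mem_cons_of_mem hm, fun x hx => ?_⟩
      rcases Finset.mem_cons.1 hx with rfl | hx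
      · exact hma
      · exact hbest x hx

namespace ExtGameP

variable {A I : Type} (G : ExtGameP A I)

theorem length_lt_card {h : List A} (hh : h ∈ G.H) : h.length < G.H.card := by
  have hmaps : Set.MapsTo (fun k => h.take k) (Finset.range (h.length + 1)) G.H :=
    fun k _ => G.prefix_closed h hh _ (List.take_prefix k h)
  have hinj : Set.InjOn (fun k => h.take k) (Finset.range (h.length + 1)) := by
    intro k hk l hl hkl
    simp only [Finset.coe_range, Set.mem_Iio] at hk hl
    simpa [Nat.min_eq_left (Nat.le_of_lt_succ hk), Nat.min_eq_left (Nat.le_of_lt_succ hl)]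
      using congrArg List.length hkl
  simpa using Finset.card_le_card_of_injOn _ hmaps hinj

theorem induction_on_histories {motive : List A → Prop}
    (terminal : ∀ h, G.Terminal h → motive h)
    (step : ∀ h ∈ G.H, ¬ G.Terminal h → (∀ a, h ++ [a] ∈ G.H → motive (h ++ [a])) → motive h) :
    ∀ h ∈ G.H, motive h := by
  suffices ∀ n, ∀ h ∈ G.H, G.H.card - h.length = n → motive h from
    fun h hh => this _ h hh rfl
  intro n
  induction n using Nat.strong_induction_on with
  | _ n ih =>
    intro h hh hn
    by_cases ht : G.Terminal h
    · exact terminal h ht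
    · refine step h hh ht fun a ha => ih _ ?_ _ ha rfl
      have := G.length_lt_card hh
      simp only [List.length_append, List.length_singleton]
      omega

structure PrefsTotalTransitive : Prop where
  total : ∀ i z z', G.Terminal z → G.Terminal z' → G.pref i z z' ∨ G.pref i z' z
  trans : ∀ i z z' z'', G.pref i z z' → G.pref i z' z'' → G.pref i z z''

variable {G}

theorem run_of_terminal (σ : List A → A) {h : List A} (ht : G.Terminal h) (n : ℕ) :
    G.run σ n h = h := by
  cases n <;> simp [run, ht]

theorem run_add (σ : List A → A) (m n : ℕ) (h : List A) :
    G.run σ (m + n) h = G.run σ n (G.run σ m h) := by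
  induction m generalizing h with
  | zero => simp [run]
  | succ m ih =>
    by_cases ht : G.Terminal h
    · simp only [run_of_terminal σ ht]
    · rw [Nat.add_right_comm]
      simp only [run, if_neg ht, ih]

theorem terminal_run {σ : List A → A} (hσ : G.Valid σ) {n : ℕ} {h : List A} (hh : h ∈ G.H)
    (hn : G.H.card ≤ n + h.length) : G.Terminal (G.run σ n h) := by
  induction n generalizing h with
  | zero => exact absurd (G.length_lt_card hh) (by omega)
  | succ n ih =>
    by_cases ht : G.Terminal h
    · rwa [run_of_terminal σ ht]
    · simp only [run, if_neg ht]
      exact ih (hσ h hh ht) (by simp only [List.length_append, List.length_singleton]; omega)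

theorem outcomeFrom_of_terminal (σ : List A → A) {h : List A} (ht : G.Terminal h) :
    G.outcomeFrom σ h = h :=
  run_of_terminal σ ht _

theorem outcomeFrom_of_not_terminal {σ : List A → A} (hσ : G.Valid σ) {h : List A}
    (hh : h ∈ G.H) (ht : ¬ G.Terminal h) :
    G.outcomeFrom σ h = G.outcomeFrom σ (h ++ [σ h]) := by
  obtain ⟨n, hn⟩ : ∃ n, G.H.card = n + 1 := Nat.exists_eq_add_one.2 (G.length_lt_card hh).pos
  have hchild : h ++ [σ h] ∈ G.H := hσ h hh ht
  -- one unit of fuel is spent at `h`, but the run from the child ends within the remaining `n`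
  have hterm : G.Terminal (G.run σ n (h ++ [σ h])) :=
    terminal_run hσ hchild (by simp only [List.length_append, List.length_singleton]; omega)
  rw [outcomeFrom, outcomeFrom, hn, run, if_neg ht, run_add, run_of_terminal σ hterm]

variable (G) [Nonempty A]

noncomputable def bestAction (h : List A) (v : A → List A) : A :=
  if hex : ∃ a, h ++ [a] ∈ G.H ∧ ∀ b, h ++ [b] ∈ G.H → G.pref (G.P h) (v a) (v b) then
    hex.choose
  else Classical.arbitrary A

noncomputable def backwardInductionOutcome (h : List A) : List A :=
  if h ∈ G.H ∧ ¬ G.Terminal h then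
    backwardInductionOutcome
      (h ++ [G.bestAction h fun a => backwardInductionOutcome (h ++ [a])])
  else h
termination_by G.H.card - h.length
decreasing_by
  all_goals
    have := G.length_lt_card ‹h ∈ G.H ∧ ¬ G.Terminal h›.1
    simp only [List.length_append, List.length_singleton]
    omega

noncomputable def backwardInduction (h : List A) : A :=
  G.bestAction h fun a => G.backwardInductionOutcome (h ++ [a])

variable {G}

theorem backwardInductionOutcome_of_terminal {h : List A} (ht : G.Terminal h) :
    G.backwardInductionOutcome h = h := by
  rw [backwardInductionOutcome, if_neg (fun hh => hh.2 ht)]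

theorem backwardInductionOutcome_of_not_terminal {h : List A} (hh : h ∈ G.H)
    (ht : ¬ G.Terminal h) :
    G.backwardInductionOutcome h = G.backwardInductionOutcome (h ++ [G.backwardInduction h]) := by
  rw [backwardInductionOutcome, if_pos ⟨hh, ht⟩, backwardInduction]

theorem bestAction_spec (hG : G.PrefsTotalTransitive) {h : List A} (hh : h ∈ G.H)
    (ht : ¬ G.Terminal h) {v : A → List A} (hv : ∀ a, h ++ [a] ∈ G.H → G.Terminal (v a)) :
    h ++ [G.bestAction h v] ∈ G.H ∧
      ∀ b, h ++ [b] ∈ G.H → G.pref (G.P h) (v (G.bestAction h v)) (v b) := by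
  let moves : Finset A :=
    G.H.preimage (fun a => h ++ [a])
      ((List.append_right_injective h).comp List.singleton_injective).injOn
  have hmoves : ∀ a, a ∈ moves ↔ h ++ [a] ∈ G.H := fun a => Finset.mem_preimage
  have hne : moves.Nonempty := by
    by_contra hempty
    exact ht ⟨hh, fun a ha => hempty ⟨a, (hmoves a).2 ha⟩⟩
  obtain ⟨a, ha, hbest⟩ := Finset.exists_forall_rel_of_total (hG.trans (G.P h)) v hne
    fun a ha b hb => hG.total _ _ _ (hv a ((hmoves a).1 ha)) (hv b ((hmoves b).1 hb))
  have hex : ∃ a, h ++ [a] ∈ G.H ∧ ∀ b, h ++ [b] ∈ G.H → G.pref (G.P h) (v a) (v b) :=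
    ⟨a, (hmoves a).1 ha, fun b hb => hbest b ((hmoves b).2 hb)⟩
  rw [bestAction, dif_pos hex]
  exact hex.choose_spec

theorem terminal_backwardInductionOutcome (hG : G.PrefsTotalTransitive) :
    ∀ h ∈ G.H, G.Terminal (G.backwardInductionOutcome h) := by
  refine G.induction_on_histories (fun h ht => ?_) fun h hh ht ih => ?_
  · rwa [backwardInductionOutcome_of_terminal ht]
  · rw [backwardInductionOutcome_of_not_terminal hh ht]
    exact ih _ (bestAction_spec hG hh ht ih).1

theorem backwardInduction_spec (hG : G.PrefsTotalTransitive) {h : List A} (hh : h ∈ G.H)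
    (ht : ¬ G.Terminal h) :
    h ++ [G.backwardInduction h] ∈ G.H ∧ ∀ b, h ++ [b] ∈ G.H →
      G.pref (G.P h) (G.backwardInductionOutcome (h ++ [G.backwardInduction h]))
        (G.backwardInductionOutcome (h ++ [b])) :=
  bestAction_spec hG hh ht fun _ ha => terminal_backwardInductionOutcome hG _ ha

theorem valid_backwardInduction (hG : G.PrefsTotalTransitive) : G.Valid G.backwardInduction :=
  fun _ hh ht => (backwardInduction_spec hG hh ht).1

theorem outcomeFrom_backwardInduction (hG : G.PrefsTotalTransitive) :
    ∀ h ∈ G.H, G.outcomeFrom G.backwardInduction h = G.backwardInductionOutcome h := by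
  have hvalid := valid_backwardInduction hG
  refine G.induction_on_histories (fun h ht => ?_) fun h hh ht ih => ?_
  · rw [outcomeFrom_of_terminal _ ht, backwardInductionOutcome_of_terminal ht]
  · rw [outcomeFrom_of_not_terminal hvalid hh ht, backwardInductionOutcome_of_not_terminal hh ht]
    exact ih _ (hvalid h hh ht)

theorem pref_outcomeFrom_backwardInduction (hG : G.PrefsTotalTransitive) {h : List A}
    (hh : h ∈ G.H) (ht : ¬ G.Terminal h) {b : A} (hb : h ++ [b] ∈ G.H) :
    G.pref (G.P h) (G.outcomeFrom G.backwardInduction h)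
      (G.outcomeFrom G.backwardInduction (h ++ [b])) := by
  rw [outcomeFrom_backwardInduction hG _ hh, backwardInductionOutcome_of_not_terminal hh ht,
    outcomeFrom_backwardInduction hG _ hb]
  exact (backwardInduction_spec hG hh ht).2 b hb

end ExtGameP

/-- Backward induction existence: every finite extensive game with perfect
information in which each player's preference over terminal histories is
total and transitive has at least one subgame perfect equilibrium. -/
theorem stmt_18 {A I : Type} [Nonempty A] (G : ExtGameP A I)
    (htotal : ∀ i : I, ∀ z z' : List A, G.Terminal z → G.Terminal z' →
      G.pref i z z' ∨ G.pref i z' z)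
    (htrans : ∀ i : I, Transitive (G.pref i)) :
    ∃ σ : List A → A, G.IsSPE σ := by
  have hG : G.PrefsTotalTransitive := ⟨htotal, htrans⟩
  have hvalid := ExtGameP.valid_backwardInduction hG
  refine ⟨G.backwardInduction, hvalid, fun i h hh σ' hσ' hagree => ?_⟩
  refine G.induction_on_histories
    (motive := fun h => G.pref i (G.outcomeFrom G.backwardInduction h) (G.outcomeFrom σ' h))
    (fun h ht => ?_) (fun h hh ht ih => ?_) h hh
  · rw [G.outcomeFrom_of_terminal _ ht, G.outcomeFrom_of_terminal _ ht]
    exact (htotal i h h ht ht).elim id id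
  have hdev : h ++ [σ' h] ∈ G.H := hσ' h hh ht
  rw [G.outcomeFrom_of_not_terminal hσ' hh ht]
  by_cases hi : G.P h = i
  · exact htrans i (hi ▸ G.pref_outcomeFrom_backwardInduction hG hh ht hdev) (ih _ hdev)
  · rw [G.outcomeFrom_of_not_terminal hvalid hh ht, hagree h hi]
    exact ih _ (hvalid h hh ht)
end
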